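/- arXiv:2512.03325 — 2 statements merged into one kernel-verified Lean document; each statement's English description precedes it below -/
import Mathlib

section
/- Concentration of the norm of degree-k Hermite features (Lemma F.1). Fix an integer k ≥ 1. There exist constants C, C', c > 0 depending only on k such that for every d ≥ 1, if x ~ N(0, I_d), then with probability at least 1 − C·e^{−cd} one has ‖h_k(x)‖₂² = Σ_{𝐤∈ℕ^d: ‖𝐤‖₁=k} He_𝐤(x)² ≤ C'·d^k. -/
/-!
Every univariate `He j` is a polynomial of degree `j`, so `He j y ^ 2 ≤ (B (1 + y²)) ^ j` for
all `j ≤ k`, with a constant `B` depending only on `k`. By the multinomial theorem this bounds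
`‖h_k(x)‖²` by `(B (d + ‖x‖²)) ^ k`. A Chernoff bound for the chi-square variable `‖x‖²`,
with `E exp (‖x‖² / 4) = √2 ^ d`, gives `‖x‖² < 3 d` outside an event of probability
`exp (-(3/4 - log √2) d)`, and there `‖h_k(x)‖² ≤ (4 B d) ^ k`.
-/
noncomputable section

open MeasureTheory ProbabilityTheory

/-- The degree-`k` orthonormal probabilist's Hermite polynomial, normalized so that
`E[He j G * He k G] = 1{j=k}` for `G ~ N(0,1)`. -/
def He (k : ℕ) (x : ℝ) : ℝ :=
  (Polynomial.aeval x (Polynomial.hermite k)) / Real.sqrt (Nat.factorial k)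

/-- Multi-indices on `Fin d` of total degree `k` (an index set of cardinality `B_{d,k}`). -/
abbrev MIdx (d k : ℕ) : Type :=
  {κ : Fin d → ℕ // κ ∈ Finset.Nat.antidiagonalTuple d k}

/-- The vector `h_k(x)` of all degree-`k` multivariate Hermite polynomials. -/
def hvec (d k : ℕ) (x : Fin d → ℝ) : MIdx d k → ℝ :=
  fun κ => ∏ i, He (κ.1 i) (x i)

/-- The standard Gaussian measure on `ι → ℝ`. -/
def stdG (ι : Type*) [Fintype ι] : Measure (ι → ℝ) :=
  Measure.pi fun _ => gaussianReal 0 1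

open Real Finset Polynomial

lemma Polynomial.exists_sq_eval_le_mul_one_add_sq_pow (p : ℝ[X]) {n : ℕ}
    (hn : p.natDegree ≤ n) :
    ∃ C, ∀ x : ℝ, p.eval x ^ 2 ≤ C * (1 + x ^ 2) ^ n := by
  refine ⟨(n + 1) * ∑ m ∈ range (n + 1), p.coeff m ^ 2, fun x => ?_⟩
  have hpow : ∀ m ∈ range (n + 1), (x ^ m) ^ 2 ≤ (1 + x ^ 2) ^ n := fun m hm => by
    rw [← pow_mul, mul_comm, pow_mul]
    exact (pow_le_pow_left₀ (sq_nonneg x) (by linarith) m).trans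
      (pow_le_pow_right₀ (by nlinarith) (Nat.lt_succ_iff.1 (mem_range.1 hm)))
  rw [eval_eq_sum_range' (Nat.lt_succ_of_le hn)]
  calc (∑ m ∈ range (n + 1), p.coeff m * x ^ m) ^ 2
      ≤ (∑ m ∈ range (n + 1), p.coeff m ^ 2) * ∑ m ∈ range (n + 1), (x ^ m) ^ 2 :=
        sum_mul_sq_le_sq_mul_sq _ _ _
    _ ≤ (∑ m ∈ range (n + 1), p.coeff m ^ 2) * ∑ m ∈ range (n + 1), (1 + x ^ 2) ^ n := by
        gcongr with m hm; exact hpow m hm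
    _ = _ := by rw [sum_const, card_range, nsmul_eq_mul]; push_cast; ring

lemma He_eq_eval (j : ℕ) (x : ℝ) :
    He j x = (C (√(j.factorial : ℝ))⁻¹ * (hermite j).map (Int.castRingHom ℝ)).eval x := by
  rw [He, eval_mul, eval_C, eval_map, aeval_def, div_eq_inv_mul]; rfl

lemma exists_He_sq_le_pow (j : ℕ) :
    ∃ B, 1 ≤ B ∧ ∀ x, He j x ^ 2 ≤ (B * (1 + x ^ 2)) ^ j := by
  rcases j.eq_zero_or_pos with rfl | hj
  · exact ⟨1, le_rfl, fun x => by simp [He, hermite_zero]⟩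
  have hdeg :
      (C (√(j.factorial : ℝ))⁻¹ * (hermite j).map (Int.castRingHom ℝ)).natDegree ≤ j :=
    natDegree_C_mul_le _ _ |>.trans <| natDegree_map_le.trans (natDegree_hermite (n := j)).le
  obtain ⟨A, hA⟩ := exists_sq_eval_le_mul_one_add_sq_pow _ hdeg
  refine ⟨max A 1, le_max_right A 1, fun x => ?_⟩
  rw [He_eq_eval, mul_pow]
  calc _ ≤ A * (1 + x ^ 2) ^ j := hA x
    _ ≤ max A 1 ^ j * (1 + x ^ 2) ^ j := by
      gcongr
      exact (le_max_left A 1).trans (le_self_pow₀ (le_max_right A 1) hj.ne')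

lemma exists_He_sq_le_pow_of_le (k : ℕ) :
    ∃ B, 1 ≤ B ∧ ∀ j ≤ k, ∀ x, He j x ^ 2 ≤ (B * (1 + x ^ 2)) ^ j := by
  induction k with
  | zero => simpa using exists_He_sq_le_pow 0
  | succ k ih =>
    obtain ⟨B, hB1, hB⟩ := ih
    obtain ⟨B', hB'1, hB'⟩ := exists_He_sq_le_pow (k + 1)
    refine ⟨max B B', le_max_of_le_left hB1, fun j hj x => ?_⟩
    rcases Nat.le_succ_iff.1 hj with hj | rfl
    · exact (hB j hj x).trans (by gcongr; exact le_max_left B B')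
    · exact (hB' x).trans (by gcongr; exact le_max_right B B')

lemma sum_prod_pow_antidiagonalTuple_le_sum_pow {R : Type*} [CommSemiring R] [PartialOrder R]
    [IsOrderedRing R] (d k : ℕ) {z : Fin d → R} (hz : ∀ i, 0 ≤ z i) :
    ∑ κ ∈ Nat.antidiagonalTuple d k, ∏ i, z i ^ κ i ≤ (∑ i, z i) ^ k := by
  rw [sum_pow_eq_sum_piAntidiag, piAntidiag_univ_fin_eq_antidiagonalTuple]
  refine sum_le_sum fun κ _ =>
    le_mul_of_one_le_left (prod_nonneg fun i _ => pow_nonneg (hz i) _) ?_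
  simpa using Nat.mono_cast (α := R) (Nat.multinomial_pos univ κ)

lemma sum_sq_hvec_le {d k : ℕ} {B : ℝ} (hB0 : 0 ≤ B)
    (hB : ∀ j ≤ k, ∀ y, He j y ^ 2 ≤ (B * (1 + y ^ 2)) ^ j) (x : Fin d → ℝ) :
    ∑ κ : MIdx d k, hvec d k x κ ^ 2 ≤ (B * (d + ∑ i, x i ^ 2)) ^ k := by
  have hsum : B * (d + ∑ i, x i ^ 2) = ∑ i, B * (1 + x i ^ 2) := by
    rw [← mul_sum, sum_add_distrib]
    simp
  simp only [hvec]
  rw [hsum, sum_coe_sort (Nat.antidiagonalTuple d k) fun κ => (∏ i, He (κ i) (x i)) ^ 2]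
  calc ∑ κ ∈ Nat.antidiagonalTuple d k, (∏ i, He (κ i) (x i)) ^ 2
      ≤ ∑ κ ∈ Nat.antidiagonalTuple d k, ∏ i, (B * (1 + x i ^ 2)) ^ κ i := by
        refine sum_le_sum fun κ hκ => ?_
        rw [← prod_pow]
        refine prod_le_prod (fun i _ => sq_nonneg _) fun i _ => hB _ ?_ _
        rw [← (Nat.mem_antidiagonalTuple.1 hκ)]
        exact single_le_sum (fun i _ => Nat.zero_le _) (mem_univ i)
    _ ≤ _ := sum_prod_pow_antidiagonalTuple_le_sum_pow d k fun i => by positivity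

lemma gaussianPDFReal_zero_one_mul_exp_mul_sq (t x : ℝ) :
    gaussianPDFReal 0 1 x * exp (t * x ^ 2) = (√(2 * π))⁻¹ * exp (-(1 / 2 - t) * x ^ 2) := by
  rw [gaussianPDFReal, mul_assoc, ← exp_add]
  congr 2
  · simp
  · push_cast
    ring

-- For `1 / 2 ≤ t` both sides are junk `0`.
lemma integral_exp_mul_sq_gaussianReal (t : ℝ) :
    ∫ x, exp (t * x ^ 2) ∂gaussianReal 0 1 = √((1 - 2 * t)⁻¹) := by
  simp_rw [integral_gaussianReal_eq_integral_smul one_ne_zero, smul_eq_mul,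
    gaussianPDFReal_zero_one_mul_exp_mul_sq, integral_const_mul, integral_gaussian]
  rw [← sqrt_inv, ← sqrt_mul (by positivity)]
  congr 1
  field_simp

lemma integrable_exp_mul_sq_gaussianReal {t : ℝ} (ht : t < 1 / 2) :
    Integrable (fun x => exp (t * x ^ 2)) (gaussianReal 0 1) := by
  by_contra h
  have := integral_exp_mul_sq_gaussianReal t
  rw [integral_undef h] at this
  exact (sqrt_pos.2 (inv_pos.2 (by linarith))).ne this

instance (ι : Type*) [Fintype ι] : IsProbabilityMeasure (stdG ι) := by
  unfold stdG; infer_instance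

section StdGaussian

variable {ι : Type*} [Fintype ι]

lemma exp_mul_sum_sq (t : ℝ) (x : ι → ℝ) :
    exp (t * ∑ i, x i ^ 2) = ∏ i, exp (t * x i ^ 2) := by
  rw [mul_sum, exp_sum]

lemma integrable_exp_mul_sum_sq_stdG {t : ℝ} (ht : t < 1 / 2) :
    Integrable (fun x : ι → ℝ => exp (t * ∑ i, x i ^ 2)) (stdG ι) := by
  simp_rw [exp_mul_sum_sq]
  exact Integrable.fintype_prod fun _ => integrable_exp_mul_sq_gaussianReal ht

lemma mgf_sum_sq_stdG (t : ℝ) :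
    mgf (fun x : ι → ℝ => ∑ i, x i ^ 2) (stdG ι) t =
      √((1 - 2 * t)⁻¹) ^ Fintype.card ι := by
  simp_rw [mgf, exp_mul_sum_sq]
  rw [stdG, integral_fintype_prod_eq_pow (fun y => exp (t * y ^ 2)),
    integral_exp_mul_sq_gaussianReal]

lemma measureReal_stdG_sum_sq_ge_le (a : ℝ) :
    (stdG ι).real {x | a ≤ ∑ i, x i ^ 2} ≤ exp (-(a / 4)) * √2 ^ Fintype.card ι := by
  have h := measure_ge_le_exp_mul_mgf a (by norm_num : (0 : ℝ) ≤ 1 / 4)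
    (integrable_exp_mul_sum_sq_stdG (ι := ι) (by norm_num))
  rw [mgf_sum_sq_stdG] at h
  convert h using 3
  · ring
  · norm_num

lemma measure_stdG_sum_sq_ge_three_mul_card_le :
    stdG ι {x | 3 * Fintype.card ι ≤ ∑ i, x i ^ 2} ≤
      ENNReal.ofReal (exp (-((3 / 4 - log √2) * Fintype.card ι))) := by
  refine (ENNReal.le_ofReal_iff_toReal_le (measure_ne_top _ _) (exp_pos _).le).2 ?_
  calc _ ≤ exp (-(3 * Fintype.card ι / 4)) * √2 ^ Fintype.card ι :=
        measureReal_stdG_sum_sq_ge_le _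
    _ = exp (-((3 / 4 - log √2) * Fintype.card ι)) := by
      rw [← exp_log (by positivity : (0 : ℝ) < √2), ← exp_nat_mul, ← exp_add, log_exp]
      ring_nf

end StdGaussian

lemma log_sqrt_two_lt : log √2 < 3 / 4 := by
  rw [log_sqrt zero_le_two]
  linarith [log_two_lt_d9]

theorem hermite_features_norm_concentration_general (k : ℕ) :
    ∃ C C' c : ℝ, 0 < C ∧ 0 < C' ∧ 0 < c ∧
      ∀ d : ℕ, 1 ≤ d →
        1 - ENNReal.ofReal (C * Real.exp (-(c * d))) ≤
          stdG (Fin d) {x | ∑ κ : MIdx d k, (hvec d k x κ) ^ 2 ≤ C' * (d : ℝ) ^ k} := by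
  obtain ⟨B, hB1, hB⟩ := exists_He_sq_le_pow_of_le k
  refine ⟨1, (4 * B) ^ k, 3 / 4 - log √2, one_pos, by positivity,
    sub_pos.2 log_sqrt_two_lt, fun d _ => ?_⟩
  have hsub : {x : Fin d → ℝ | 3 * d ≤ ∑ i, x i ^ 2}ᶜ ⊆
      {x | ∑ κ : MIdx d k, hvec d k x κ ^ 2 ≤ (4 * B) ^ k * (d : ℝ) ^ k} := fun x hx => by
    have hlt : ∑ i, x i ^ 2 < 3 * d := not_le.1 hx
    have hnonneg : 0 ≤ ∑ i, x i ^ 2 := sum_nonneg fun i _ => sq_nonneg (x i)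
    calc _ ≤ (B * (d + ∑ i, x i ^ 2)) ^ k := sum_sq_hvec_le (by linarith) hB x
      _ ≤ (4 * B * d) ^ k := by gcongr ?_ ^ k; nlinarith
      _ = _ := mul_pow _ _ _
  have hmeas : MeasurableSet {x : Fin d → ℝ | 3 * d ≤ ∑ i, x i ^ 2} :=
    measurableSet_le measurable_const (by fun_prop)
  calc 1 - ENNReal.ofReal (1 * exp (-((3 / 4 - log √2) * d)))
      ≤ 1 - stdG (Fin d) {x | 3 * d ≤ ∑ i, x i ^ 2} := by
        rw [one_mul]
        gcongr
        simpa using measure_stdG_sum_sq_ge_three_mul_card_le (ι := Fin d)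
    _ = stdG (Fin d) {x | 3 * d ≤ ∑ i, x i ^ 2}ᶜ := (prob_compl_eq_one_sub hmeas).symm
    _ ≤ _ := measure_mono hsub

/-- **Lemma F.1**: For fixed `k ≥ 1` there are constants `C, C', c > 0` depending only on `k`
such that for every `d ≥ 1`, if `x ~ N(0, I_d)`, then with probability at least
`1 - C e^{-cd}` one has `‖h_k(x)‖₂² ≤ C' d^k`. -/
theorem hermite_features_norm_concentration (k : ℕ) (hk : 1 ≤ k) :
    ∃ C C' c : ℝ, 0 < C ∧ 0 < C' ∧ 0 < c ∧
      ∀ d : ℕ, 1 ≤ d →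
        1 - ENNReal.ofReal (C * Real.exp (-(c * d))) ≤
          stdG (Fin d) {x | ∑ κ : MIdx d k, (hvec d k x κ) ^ 2 ≤ C' * (d : ℝ) ^ k} :=
  hermite_features_norm_concentration_general k
end
end

section
/- Lipschitz continuity of the Moreau envelope of the loss (Proposition D.1). Let ℓ : ℝ×ℝ → ℝ be nonnegative, convex in its second argument, three times continuously differentiable, and suppose all of its first-, second- and third-order partial derivatives are bounded by a constant C₁. Then there exists a constant C > 0 depending only on C₁ such that for all y, y', z, z' ∈ ℝ and all γ, γ' > 0: |M_y(z; γ) − M_{y'}(z; γ)| ≤ C|y − y'|, |M_y(z; γ) − M_y(z'; γ)| ≤ C|z − z'|, and |M_y(z; γ) − M_y(z; γ')| ≤ C|γ − γ'|. -/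
/-!
Substituting `x = z - γ w` turns the Moreau envelope into an infimum over `w` of
`ℓ(y, z - γ w) - ℓ(0,0) + γ w² / 2`. For each fixed `w` this is `C₁`-Lipschitz in `(y, z)`,
so the infimum is as well. In `γ` the objective at `w` is only `(C₁|w| + w²/2)`-Lipschitz,
but the `w` with `|w| > 2 C₁` may be dropped: there the objective is at least its value at
`w = 0`, which does not depend on `γ`. This gives the Lipschitz constant `4 C₁²` in `γ`.
-/

noncomputable section

/-- The Moreau envelope `M_y(z; γ) = min_x { ℓ(y,x) − ℓ(0,0) + (z−x)²/(2γ) }` of the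
centered loss. -/
def Moreau (ℓ : ℝ → ℝ → ℝ) (y z γ : ℝ) : ℝ :=
  ⨅ x : ℝ, (ℓ y x - ℓ 0 0 + (z - x) ^ 2 / (2 * γ))

open Set Function NNReal

theorem ciInf_le_ciInf_add_of_forall_exists {α : Type*} {ι ι' : Sort*}
    [ConditionallyCompleteLattice α] [AddGroup α] [AddRightMono α] [Nonempty ι'] {f : ι → α}
    {g : ι' → α} {c : α} (hf : BddBelow (range f)) (h : ∀ i', ∃ i, f i ≤ g i' + c) :
    ⨅ i, f i ≤ (⨅ i', g i') + c :=
  le_ciInf_add fun i' => (h i').elim fun i hi => ciInf_le_of_le hf i hi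

theorem lipschitzWith_of_norm_iteratedFDeriv_one_le {E F : Type*} [NormedAddCommGroup E]
    [NormedSpace ℝ E] [NormedAddCommGroup F] [NormedSpace ℝ F] {f : E → F} {K : ℝ≥0}
    (hf : Differentiable ℝ f) (h : ∀ x, ‖iteratedFDeriv ℝ 1 f x‖ ≤ K) :
    LipschitzWith K f :=
  lipschitzWith_of_nnnorm_fderiv_le hf fun x => by
    rw [← NNReal.coe_le_coe, coe_nnnorm, ← norm_iteratedFDeriv_one]
    exact h x

def moreauObjective (ℓ : ℝ → ℝ → ℝ) (y z γ w : ℝ) : ℝ :=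
  ℓ y (z - γ * w) - ℓ 0 0 + γ * w ^ 2 / 2

section

variable {ℓ : ℝ → ℝ → ℝ} {K : ℝ≥0} {y z γ : ℝ}

theorem moreau_eq_iInf_moreauObjective (hγ : 0 < γ) :
    Moreau ℓ y z γ = ⨅ w, moreauObjective ℓ y z γ w := by
  refine (Surjective.iInf_congr (fun w => z - γ * w) (fun x => ⟨(z - x) / γ, ?_⟩)
    fun w => ?_).symm
  · field_simp; ring
  · simp only [moreauObjective]
    field_simp
    ring

theorem bddBelow_range_moreauObjective (hℓ : ∀ v, 0 ≤ ℓ y v) (hγ : 0 ≤ γ) :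
    BddBelow (range (moreauObjective ℓ y z γ)) :=
  ⟨-ℓ 0 0, by
    rintro _ ⟨w, rfl⟩
    have := hℓ (z - γ * w)
    unfold moreauObjective
    nlinarith [mul_nonneg hγ (sq_nonneg w)]⟩

theorem moreauObjective_zero_le (hℓ : LipschitzWith K (ℓ y)) (hγ : 0 ≤ γ) {w : ℝ}
    (hw : 2 * K ≤ |w|) : moreauObjective ℓ y z γ 0 ≤ moreauObjective ℓ y z γ w := by
  have hlip : ℓ y z - ℓ y (z - γ * w) ≤ K * (γ * |w|) := by
    have := hℓ.dist_le_mul z (z - γ * w)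
    rw [Real.dist_eq, Real.dist_eq, sub_sub_cancel, abs_mul, abs_of_nonneg hγ] at this
    exact (le_abs_self _).trans this
  have hquad : K * (γ * |w|) ≤ γ * w ^ 2 / 2 :=
    calc K * (γ * |w|) ≤ |w| / 2 * (γ * |w|) := by gcongr; linarith
      _ = γ * w ^ 2 / 2 := by rw [← sq_abs w]; ring
  simp only [moreauObjective, mul_zero, sub_zero]
  linarith

theorem moreauObjective_le_add_of_abs_le (hℓ : LipschitzWith K (ℓ y)) {w : ℝ}
    (hw : |w| ≤ 2 * K) (γ' : ℝ) :
    moreauObjective ℓ y z γ w ≤ moreauObjective ℓ y z γ' w + 4 * K ^ 2 * |γ - γ'| := by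
  have hlip : ℓ y (z - γ * w) - ℓ y (z - γ' * w) ≤ 2 * K ^ 2 * |γ - γ'| := by
    have := hℓ.dist_le_mul (z - γ * w) (z - γ' * w)
    rw [Real.dist_eq, Real.dist_eq, sub_sub_sub_cancel_left, ← sub_mul, abs_mul,
      abs_sub_comm γ'] at this
    calc _ ≤ K * (|γ - γ'| * |w|) := (le_abs_self _).trans this
      _ ≤ K * (|γ - γ'| * (2 * K)) := by gcongr
      _ = 2 * K ^ 2 * |γ - γ'| := by ring
  have hquad : γ * w ^ 2 / 2 - γ' * w ^ 2 / 2 ≤ 2 * K ^ 2 * |γ - γ'| :=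
    calc _ = (γ - γ') * |w| ^ 2 / 2 := by rw [sq_abs]; ring
      _ ≤ |γ - γ'| * (2 * K) ^ 2 / 2 := by gcongr; exact le_abs_self _
      _ = 2 * K ^ 2 * |γ - γ'| := by ring
  simp only [moreauObjective]
  linarith

theorem moreauObjective_le_add_dist (hℓ : LipschitzWith K (uncurry ℓ)) (y' z' w : ℝ) :
    moreauObjective ℓ y z γ w ≤ moreauObjective ℓ y' z' γ w + K * dist (y, z) (y', z') := by
  have hdist : dist (y, z - γ * w) (y', z' - γ * w) = dist (y, z) (y', z') := by
    simp only [Prod.dist_eq, Real.dist_eq, sub_sub_sub_cancel_right]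
  have hlip := hℓ.dist_le_mul (y, z - γ * w) (y', z' - γ * w)
  rw [hdist, Real.dist_eq, uncurry_apply_pair, uncurry_apply_pair] at hlip
  simp only [moreauObjective]
  linarith [le_abs_self (ℓ y (z - γ * w) - ℓ y' (z' - γ * w))]

theorem lipschitzWith_moreau (hℓ0 : ∀ y v, 0 ≤ ℓ y v) (hℓ : LipschitzWith K (uncurry ℓ))
    (hγ : 0 < γ) : LipschitzWith K fun p : ℝ × ℝ => Moreau ℓ p.1 p.2 γ := by
  refine LipschitzWith.of_le_add_mul K fun p q => ?_
  simp only [moreau_eq_iInf_moreauObjective hγ]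
  exact ciInf_le_ciInf_add_of_forall_exists (bddBelow_range_moreauObjective (hℓ0 _) hγ.le)
    fun w => ⟨w, moreauObjective_le_add_dist hℓ _ _ w⟩

theorem lipschitzOnWith_moreau_Ioi (hℓ0 : ∀ v, 0 ≤ ℓ y v) (hℓ : LipschitzWith K (ℓ y)) :
    LipschitzOnWith (4 * K ^ 2) (Moreau ℓ y z) (Ioi 0) := by
  refine LipschitzOnWith.of_le_add_mul _ fun γ hγ γ' hγ' => ?_
  rw [moreau_eq_iInf_moreauObjective hγ, moreau_eq_iInf_moreauObjective hγ', Real.dist_eq]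
  push_cast
  refine ciInf_le_ciInf_add_of_forall_exists
    (bddBelow_range_moreauObjective hℓ0 (le_of_lt hγ)) fun w => ?_
  rcases le_or_gt |w| (2 * K) with hw | hw
  · exact ⟨w, moreauObjective_le_add_of_abs_le hℓ hw γ'⟩
  · refine ⟨0, ?_⟩
    have h0 : moreauObjective ℓ y z γ 0 = moreauObjective ℓ y z γ' 0 := by
      simp [moreauObjective]
    have hw0 := moreauObjective_zero_le hℓ (le_of_lt hγ') hw.le (z := z)
    have : 0 ≤ 4 * (K : ℝ) ^ 2 * |γ - γ'| := by positivity
    linarith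

end

/-- **Proposition D.1**: if `ℓ` is nonnegative, convex in its second argument, three
times continuously differentiable with all partial derivatives of orders 1–3 bounded by
`C₁`, then the Moreau envelope is Lipschitz in each of its three arguments, with a
Lipschitz constant depending only on `C₁`. -/
theorem moreau_envelope_lipschitz (C1 : ℝ) (hC1 : 0 < C1) :
    ∃ C : ℝ, 0 < C ∧
      ∀ ℓ : ℝ → ℝ → ℝ,
        (∀ y v : ℝ, 0 ≤ ℓ y v) →
        (∀ y : ℝ, ConvexOn ℝ Set.univ (ℓ y)) →
        ContDiff ℝ 3 (fun q : ℝ × ℝ => ℓ q.1 q.2) →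
        (∀ i : ℕ, 1 ≤ i → i ≤ 3 →
          ∀ q : ℝ × ℝ, ‖iteratedFDeriv ℝ i (fun q : ℝ × ℝ => ℓ q.1 q.2) q‖ ≤ C1) →
        ∀ y y' z z' γ γ' : ℝ, 0 < γ → 0 < γ' →
          |Moreau ℓ y z γ - Moreau ℓ y' z γ| ≤ C * |y - y'| ∧
          |Moreau ℓ y z γ - Moreau ℓ y z' γ| ≤ C * |z - z'| ∧
          |Moreau ℓ y z γ - Moreau ℓ y z γ'| ≤ C * |γ - γ'| := by
  refine ⟨C1 + 4 * C1 ^ 2, by positivity,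
    fun ℓ hℓ0 _ hdiff hbound y y' z z' γ γ' hγ hγ' => ?_⟩
  lift C1 to ℝ≥0 using hC1.le with K
  have hK : LipschitzWith K (uncurry ℓ) :=
    lipschitzWith_of_norm_iteratedFDeriv_one_le (hdiff.differentiable (by norm_num))
      (hbound 1 le_rfl (by norm_num))
  have hM := lipschitzWith_moreau hℓ0 hK hγ
  have hKC : (K : ℝ) ≤ K + 4 * K ^ 2 := le_add_of_nonneg_right (by positivity)
  refine ⟨?_, ?_, ?_⟩
  · calc _ ≤ K * |y - y'| := by simpa [Real.dist_eq] using hM.dist_le_mul (y, z) (y', z)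
      _ ≤ _ := by gcongr
  · calc _ ≤ K * |z - z'| := by simpa [Real.dist_eq] using hM.dist_le_mul (y, z) (y, z')
      _ ≤ _ := by gcongr
  · have hγK := (lipschitzOnWith_moreau_Ioi (hℓ0 y) (hK.comp (LipschitzWith.prodMk_left y))
      (z := z)).dist_le_mul γ hγ γ' hγ'
    calc _ ≤ 4 * K ^ 2 * |γ - γ'| := by simpa [Real.dist_eq] using hγK
      _ ≤ _ := by gcongr; linarith
end
end
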